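/- Let 1 ≤ p < ∞, 0 < q, r < ∞, let u, v, w be weights on (a,b) with 0 < W(t) < ∞ for all t ∈ (a,b), and let {x_k}_{k=N}^∞ ⊂ [a,b] (N ∈ ℤ) be a discretizing sequence of W (strictly increasing, x_N = a, W(x_k) comparable to 2^{-k}). Then there exists a finite positive constant C such that (∫_a^b (∫_a^x (∫_a^t f(s)ds)^q u(t)dt)^{r/q} w(x)dx)^{1/r} ≤ C (∫_a^b f^p v)^{1/p} holds for all nonnegative measurable f on (a,b) if and only if there exist finite positive constants C′ and C″ such that both of the following hold for all nonnegative measurable f on (a,b): (Σ_{k=N+1}^∞ 2^{-k} (∫_{x_{k-1}}^{x_k} (∫_{x_{k-1}}^t f)^q u(t)dt)^{r/q})^{1/r} ≤ C′ (Σ_{k=N+1}^∞ ∫_{x_{k-1}}^{x_k} f^p v)^{1/p} and (Σ_{k=N+1}^∞ 2^{-k} (∫_a^{x_k} f)^r (∫_{x_k}^{x_{k+1}} u)^{r/q})^{1/r} ≤ C″ (Σ_{k=N+1}^∞ ∫_{x_{k-1}}^{x_k} f^p v)^{1/p}. Moreover, the least such constants satisfy C ≈ C′ + C″ with equivalence constants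 depending only on p, q, r and the discretization constants. -/

import Mathlib

open MeasureTheory ENNReal NNReal Set

noncomputable section

/-- The open interval `(a, b)` of real numbers, with extended-real endpoints. -/
def Iab (a b : EReal) : Set ℝ := {x : ℝ | a < (x : EReal) ∧ (x : EReal) < b}

/-- `𝒲(x) = ∫_x^b w(s) ds`. -/
def Wf (w : ℝ → ℝ≥0∞) (b : EReal) (x : EReal) : ℝ≥0∞ := ∫⁻ s in Iab x b, w s

/-- `V_p(x, y)`: for `p > 1` it is `(∫_x^y v^{-1/(p-1)})^{(p-1)/p}`, and for `p = 1` it is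
`ess sup_{s ∈ (x,y)} v(s)⁻¹`. -/
def Vp (v : ℝ → ℝ≥0∞) (p : ℝ) (x y : EReal) : ℝ≥0∞ :=
  if p = 1 then essSup (fun s => (v s)⁻¹) (volume.restrict (Iab x y))
  else (∫⁻ s in Iab x y, v s ^ (-(1 : ℝ) / (p - 1))) ^ ((p - 1) / p)

/-- Left-hand side of the iterated Hardy inequality. -/
def lhsIter (a b : EReal) (u w : ℝ → ℝ≥0∞) (q r : ℝ) (f : ℝ → ℝ≥0∞) : ℝ≥0∞ :=
  (∫⁻ x in Iab a b,
      (∫⁻ t in Iab a (x : EReal),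
          (∫⁻ s in Iab a (t : EReal), f s) ^ q * u t) ^ (r / q) * w x) ^ (1 / r)

/-- Right-hand side `(∫_a^b f^p v)^{1/p}`. -/
def rhsLp (a b : EReal) (v : ℝ → ℝ≥0∞) (p : ℝ) (f : ℝ → ℝ≥0∞) : ℝ≥0∞ :=
  (∫⁻ x in Iab a b, f x ^ p * v x) ^ (1 / p)

/-- The iterated Hardy inequality with constant `C` holds for all nonnegative measurable `f`. -/
def MainIneq (a b : EReal) (u v w : ℝ → ℝ≥0∞) (p q r : ℝ) (C : ℝ≥0∞) : Prop :=
  ∀ f : ℝ → ℝ≥0∞, Measurable f → lhsIter a b u w q r f ≤ C * rhsLp a b v p f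

/-- The discretized right-hand side `(Σ_{k>N} ∫_{x_{k-1}}^{x_k} f^p v)^{1/p}`. -/
def DiscRHS (v : ℝ → ℝ≥0∞) (p : ℝ) (N : ℤ) (x : ℤ → EReal) (f : ℝ → ℝ≥0∞) : ℝ≥0∞ :=
  (∑' k : {k : ℤ // N < k}, ∫⁻ s in Iab (x (k.1 - 1)) (x k.1), f s ^ p * v s) ^ (1 / p)

/-- The first discretized inequality, with constant `C`. -/
def Disc1 (u v : ℝ → ℝ≥0∞) (p q r : ℝ) (N : ℤ) (x : ℤ → EReal) (C : ℝ≥0∞) : Prop :=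
  ∀ f : ℝ → ℝ≥0∞, Measurable f →
    (∑' k : {k : ℤ // N < k}, (2 : ℝ≥0∞) ^ (-(k.1 : ℝ)) *
        (∫⁻ t in Iab (x (k.1 - 1)) (x k.1),
            (∫⁻ s in Iab (x (k.1 - 1)) (t : EReal), f s) ^ q * u t) ^ (r / q)) ^ (1 / r)
      ≤ C * DiscRHS v p N x f

/-- The second discretized inequality, with constant `C`. -/
def Disc2 (a : EReal) (u v : ℝ → ℝ≥0∞) (p q r : ℝ) (N : ℤ) (x : ℤ → EReal) (C : ℝ≥0∞) : Prop :=
  ∀ f : ℝ → ℝ≥0∞, Measurable f →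
    (∑' k : {k : ℤ // N < k}, (2 : ℝ≥0∞) ^ (-(k.1 : ℝ)) *
        (∫⁻ s in Iab a (x k.1), f s) ^ r *
        (∫⁻ s in Iab (x k.1) (x (k.1 + 1)), u s) ^ (r / q)) ^ (1 / r)
      ≤ C * DiscRHS v p N x f

/-- `B(c, d)`: the best constant of the local weighted Hardy inequality on `(c, d)`. -/
def Bconst (u v : ℝ → ℝ≥0∞) (p q : ℝ) (c d : EReal) : ℝ≥0∞ :=
  ⨆ (h : ℝ → ℝ≥0∞) (_ : Measurable h),
    (∫⁻ t in Iab c d, (∫⁻ s in Iab c (t : EReal), h s) ^ q * u t) ^ (1 / q) /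
      (∫⁻ t in Iab c d, h t ^ p * v t) ^ (1 / p)

/-- The discrete inequality featuring the local best constants `B(x_{k-1}, x_k)`. -/
def SeqB (u v : ℝ → ℝ≥0∞) (p q r : ℝ) (N : ℤ) (x : ℤ → EReal) (C : ℝ≥0∞) : Prop :=
  ∀ aa : ℤ → ℝ≥0,
    (∑' k : {k : ℤ // N < k}, (2 : ℝ≥0∞) ^ (-(k.1 : ℝ)) *
        (aa k.1 : ℝ≥0∞) ^ r * Bconst u v p q (x (k.1 - 1)) (x k.1) ^ r) ^ (1 / r)
      ≤ C * (∑' k : {k : ℤ // N < k}, (aa k.1 : ℝ≥0∞) ^ p) ^ (1 / p)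

/-- The discrete inequality featuring the quantities `V_p(x_{j-1}, x_j)`. -/
def SeqV (u v : ℝ → ℝ≥0∞) (p q r : ℝ) (N : ℤ) (x : ℤ → EReal) (C : ℝ≥0∞) : Prop :=
  ∀ aa : ℤ → ℝ≥0,
    (∑' k : {k : ℤ // N < k}, (2 : ℝ≥0∞) ^ (-(k.1 : ℝ)) *
        (∫⁻ s in Iab (x k.1) (x (k.1 + 1)), u s) ^ (r / q) *
        (∑ j ∈ Finset.Icc (N + 1) k.1, (aa j : ℝ≥0∞) * Vp v p (x (j - 1)) (x j)) ^ r) ^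
      (1 / r)
      ≤ C * (∑' k : {k : ℤ // N < k}, (aa k.1 : ℝ≥0∞) ^ p) ^ (1 / p)

/-!
Write `F(y) = ∫_a^y (∫_a^t f)^q u` (`innerHardy`), so that the left-hand side is
`(∫_a^b F^{r/q} w)^{1/r}` with `F` nondecreasing. For every nondecreasing `Φ` the bounds
`W(x_k) ≈ 2^{-k}` give `∫_a^b Φ w ≈ ∑_{k>N} 2^{-k} Φ(x_k)`: from above by bounding `Φ` on the cell
`(x_{k-1}, x_k)` by `Φ(x_k)`, from below by summation by parts against the tails
`W(x_k) = ∑_{j>k} ∫_{x_{j-1}}^{x_j} w`. So everything reduces to `∑_{k>N} 2^{-k} F(x_k)^{r/q}`.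

Both discrete summands are dominated by `F(x_k)` resp. `F(x_{k+1})`, which gives the necessity.
Conversely, on the cell `(x_{j-1}, x_j)` the increment of `F` is at most `2^q` times the local
Hardy term of the first inequality plus `(∫_a^{x_{j-1}} f)^q ∫_{x_{j-1}}^{x_j} u`, the summand of
the second one shifted by one; a discrete Hardy inequality for the weights `2^{-k}` then bounds
`∑_k 2^{-k} (∑_{j ≤ k} c_j)^{r/q}` by `∑_k 2^{-k} c_k^{r/q}`.
-/

/-! ### Summation by parts and a discrete Hardy inequality -/

namespace ENNReal

theorem tsum_sum_range_eq_tsum_tsum (h : ℕ → ℕ → ℝ≥0∞) :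
    ∑' n, ∑ k ∈ Finset.range (n + 1), h k (n - k) = ∑' k, ∑' m, h k m := by
  rw [← ENNReal.tsum_prod, ← Finset.HasAntidiagonal.sigmaAntidiagonalEquivProd.tsum_eq,
    ENNReal.tsum_sigma']
  refine tsum_congr fun n => ?_
  simp only [Finset.HasAntidiagonal.sigmaAntidiagonalEquivProd_apply]
  rw [Finset.tsum_subtype (f := fun x : ℕ × ℕ => h x.1 x.2),
    Finset.Nat.sum_antidiagonal_eq_sum_range_succ h]

theorem tsum_mul_sum_range_eq (a t : ℕ → ℝ≥0∞) :
    ∑' n, a n * ∑ i ∈ Finset.range (n + 1), t i = ∑' i, t i * ∑' m, a (i + m) := by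
  simp_rw [← ENNReal.tsum_mul_left, ← tsum_sum_range_eq_tsum_tsum, Finset.mul_sum]
  refine tsum_congr fun n => Finset.sum_congr rfl fun i hi => ?_
  rw [Nat.add_sub_cancel' (Finset.mem_range_succ_iff.mp hi), mul_comm]

theorem exists_eq_sum_range_of_monotone {T : ℕ → ℝ≥0∞} (hT : Monotone T) :
    ∃ t : ℕ → ℝ≥0∞, ∀ n, T n = ∑ i ∈ Finset.range (n + 1), t i := by
  refine ⟨fun i => Nat.casesOn i (T 0) fun j => T (j + 1) - T j, fun n => ?_⟩
  induction n with
  | zero => simp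
  | succ n ih => rw [Finset.sum_range_succ, ← ih, add_tsub_cancel_of_le (hT n.le_succ)]

theorem tsum_inv_two_pow_add (i : ℕ) : ∑' m, (2⁻¹ : ℝ≥0∞) ^ (i + m) = 2 * 2⁻¹ ^ i := by
  simp_rw [pow_add, ENNReal.tsum_mul_left, ENNReal.tsum_geometric_two, mul_comm]

/-- Summation by parts: writing `T` as the partial sums of its increments `t`, the two sides
become `∑ t i * (c * 2 * 2⁻¹ ^ i)` and `2 * ∑ t i * ∑' m, A (i + m)`. -/
theorem mul_tsum_inv_two_pow_mul_le {A T : ℕ → ℝ≥0∞} (hT : Monotone T) {c : ℝ≥0∞}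
    (hA : ∀ n, c * 2⁻¹ ^ n ≤ ∑' m, A (n + m)) :
    c * ∑' n, 2⁻¹ ^ n * T n ≤ 2 * ∑' n, A n * T n := by
  obtain ⟨t, ht⟩ := exists_eq_sum_range_of_monotone hT
  simp_rw [ht, tsum_mul_sum_range_eq, tsum_inv_two_pow_add]
  rw [← ENNReal.tsum_mul_left, ← ENNReal.tsum_mul_left]
  refine ENNReal.tsum_le_tsum fun i => ?_
  calc c * (t i * (2 * 2⁻¹ ^ i)) = 2 * (t i * (c * 2⁻¹ ^ i)) := by ring
    _ ≤ 2 * (t i * ∑' m, A (i + m)) := by gcongr; exact hA i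

/-- Each `c k` is at most `l⁻¹ ^ (n - k)` times the largest of the `l ^ (n - j) * c j`, and the
factors `l⁻¹ ^ (n - k)` sum to at most `(1 - l⁻¹)⁻¹`. -/
theorem sum_range_rpow_le {l : ℝ≥0∞} (hl : 1 < l) (hl' : l ≠ ∞) {ρ : ℝ} (hρ : 0 < ρ)
    (c : ℕ → ℝ≥0∞) (n : ℕ) :
    (∑ k ∈ Finset.range (n + 1), c k) ^ ρ
      ≤ ((1 - l⁻¹)⁻¹) ^ ρ * ∑ k ∈ Finset.range (n + 1), c k ^ ρ * (l ^ ρ) ^ (n - k) := by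
  obtain ⟨k₀, hk₀, hm⟩ := Finset.exists_mem_eq_sup _ (Finset.nonempty_range_add_one (n := n))
    fun k => l ^ (n - k) * c k
  set m := (Finset.range (n + 1)).sup fun k => l ^ (n - k) * c k
  have hl0 : l ≠ 0 := (zero_lt_one.trans hl).ne'
  have hc : ∀ k ∈ Finset.range (n + 1), c k ≤ l⁻¹ ^ (n - k) * m := fun k hk =>
    calc c k = l⁻¹ ^ (n - k) * (l ^ (n - k) * c k) := by
          rw [← mul_assoc, ← mul_pow, ENNReal.inv_mul_cancel hl0 hl', one_pow, one_mul]
      _ ≤ l⁻¹ ^ (n - k) * m := by gcongr; exact Finset.le_sup (f := fun k => l ^ (n - k) * c k) hk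
  have hgeom : ∑ k ∈ Finset.range (n + 1), l⁻¹ ^ (n - k) ≤ (1 - l⁻¹)⁻¹ := by
    have hreflect := Finset.sum_range_reflect (fun j => l⁻¹ ^ j) (n + 1)
    simp only [Nat.add_sub_cancel] at hreflect
    rw [hreflect, ← ENNReal.tsum_geometric]
    exact ENNReal.sum_le_tsum _
  calc (∑ k ∈ Finset.range (n + 1), c k) ^ ρ
      ≤ ((1 - l⁻¹)⁻¹ * m) ^ ρ := by
        gcongr
        calc ∑ k ∈ Finset.range (n + 1), c k
            ≤ ∑ k ∈ Finset.range (n + 1), l⁻¹ ^ (n - k) * m := Finset.sum_le_sum hc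
          _ ≤ (1 - l⁻¹)⁻¹ * m := by rw [← Finset.sum_mul]; gcongr
    _ = ((1 - l⁻¹)⁻¹) ^ ρ * (c k₀ ^ ρ * (l ^ ρ) ^ (n - k₀)) := by
        rw [hm, ENNReal.mul_rpow_of_nonneg _ _ hρ.le, ENNReal.mul_rpow_of_nonneg _ _ hρ.le,
          ← ENNReal.rpow_natCast_mul, ← ENNReal.rpow_mul_natCast, mul_comm ρ, mul_comm (c k₀ ^ ρ)]
    _ ≤ _ := by
        gcongr
        exact Finset.single_le_sum (f := fun k => c k ^ ρ * (l ^ ρ) ^ (n - k))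
          (fun _ _ => zero_le) hk₀

theorem exists_tsum_inv_two_pow_mul_sum_range_rpow_le {ρ : ℝ} (hρ : 0 < ρ) :
    ∃ K : ℝ≥0∞, K ≠ 0 ∧ K ≠ ∞ ∧ ∀ c : ℕ → ℝ≥0∞,
      ∑' n, 2⁻¹ ^ n * (∑ k ∈ Finset.range (n + 1), c k) ^ ρ ≤ K * ∑' n, 2⁻¹ ^ n * c n ^ ρ := by
  -- any ratio `1 < σ < 2` works: the loss `σ ^ (n - k)` of `sum_range_rpow_le` is absorbed by `2⁻¹`
  set σ : ℝ≥0∞ := 3 / 2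
  have hσ1 : 1 < σ := by
    rw [ENNReal.lt_div_iff_mul_lt (by norm_num) (by norm_num)]; norm_num
  have hσ2 : 2⁻¹ * σ < 1 := by
    rw [← ENNReal.div_eq_inv_mul, ENNReal.div_lt_iff (by norm_num) (by norm_num),
      ENNReal.div_lt_iff (by norm_num) (by norm_num)]
    norm_num
  set l := σ ^ ρ⁻¹
  have hl : 1 < l := ENNReal.one_lt_rpow hσ1 (inv_pos.mpr hρ)
  have hl' : l ≠ ∞ := ENNReal.rpow_ne_top_of_nonneg (inv_pos.mpr hρ).le
    (ENNReal.div_ne_top (by norm_num) (by norm_num))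
  have hlσ : l ^ ρ = σ := ENNReal.rpow_inv_rpow hρ.ne' σ
  have hM : (1 - l⁻¹)⁻¹ ≠ ∞ :=
    ENNReal.inv_ne_top.mpr (tsub_pos_of_lt (ENNReal.inv_lt_one.mpr hl)).ne'
  have hM0 : (1 - l⁻¹)⁻¹ ≠ 0 := ENNReal.inv_ne_zero.mpr (ENNReal.sub_ne_top ENNReal.one_ne_top)
  refine ⟨((1 - l⁻¹)⁻¹) ^ ρ * (1 - 2⁻¹ * σ)⁻¹, ?_, ?_, fun c => ?_⟩
  · exact mul_ne_zero (ENNReal.rpow_pos (pos_iff_ne_zero.mpr hM0) hM).ne'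
      (ENNReal.inv_ne_zero.mpr (ENNReal.sub_ne_top ENNReal.one_ne_top))
  · exact ENNReal.mul_ne_top (ENNReal.rpow_ne_top_of_nonneg hρ.le hM)
      (ENNReal.inv_ne_top.mpr (tsub_pos_of_lt hσ2).ne')
  calc ∑' n, 2⁻¹ ^ n * (∑ k ∈ Finset.range (n + 1), c k) ^ ρ
      ≤ ∑' n, 2⁻¹ ^ n * (((1 - l⁻¹)⁻¹) ^ ρ *
          ∑ k ∈ Finset.range (n + 1), c k ^ ρ * σ ^ (n - k)) := by
        gcongr with n
        rw [← hlσ]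
        exact sum_range_rpow_le hl hl' hρ c n
    _ = ((1 - l⁻¹)⁻¹) ^ ρ * ∑' n, ∑ k ∈ Finset.range (n + 1),
          2⁻¹ ^ k * c k ^ ρ * (2⁻¹ * σ) ^ (n - k) := by
        rw [← ENNReal.tsum_mul_left]
        refine tsum_congr fun n => ?_
        rw [Finset.mul_sum, Finset.mul_sum, Finset.mul_sum]
        refine Finset.sum_congr rfl fun k hk => ?_
        rw [mul_pow, ← Nat.add_sub_cancel' (Finset.mem_range_succ_iff.mp hk), pow_add,
          Nat.add_sub_cancel_left]
        ring
    _ = _ := by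
        rw [tsum_sum_range_eq_tsum_tsum (fun k m => 2⁻¹ ^ k * c k ^ ρ * (2⁻¹ * σ) ^ m)]
        simp_rw [ENNReal.tsum_mul_left, ENNReal.tsum_geometric]
        rw [ENNReal.tsum_mul_right]
        ring

end ENNReal

/-! ### Elementary inequalities in `ℝ≥0∞` -/

namespace ENNReal

theorem add_rpow_le_two_rpow_mul (X Y : ℝ≥0∞) {s : ℝ} (hs : 0 ≤ s) :
    (X + Y) ^ s ≤ 2 ^ s * (X ^ s + Y ^ s) :=
  calc (X + Y) ^ s ≤ (2 * max X Y) ^ s := by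
        gcongr; rw [two_mul]; exact add_le_add (le_max_left _ _) (le_max_right _ _)
    _ = 2 ^ s * max X Y ^ s := ENNReal.mul_rpow_of_nonneg _ _ hs
    _ ≤ 2 ^ s * (X ^ s + Y ^ s) := by
        gcongr
        rcases le_total X Y with h | h
        · rw [max_eq_right h]; exact le_add_self
        · rw [max_eq_left h]; exact le_self_add

theorem rpow_add_rpow_le_two_mul (X Y : ℝ≥0∞) {s : ℝ} (hs : 0 ≤ s) :
    X ^ s + Y ^ s ≤ 2 * (X + Y) ^ s := by
  rw [two_mul]
  gcongr
  exacts [le_self_add, le_add_self]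

theorem rpow_one_div_le_mul_of_le_mul_rpow {S K X : ℝ≥0∞} {r : ℝ} (hr : 0 < r)
    (h : S ≤ K * X ^ r) : S ^ (1 / r) ≤ K ^ (1 / r) * X := by
  calc S ^ (1 / r) ≤ (K * X ^ r) ^ (1 / r) := by gcongr
    _ = K ^ (1 / r) * X := by
        rw [ENNReal.mul_rpow_of_nonneg _ _ (by positivity), ← ENNReal.rpow_mul,
          mul_one_div_cancel hr.ne', ENNReal.rpow_one]

theorem rpow_mul_rpow_div (X U : ℝ≥0∞) {q r : ℝ} (hq : 0 < q) (hr : 0 ≤ r) :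
    (X ^ q * U) ^ (r / q) = X ^ r * U ^ (r / q) := by
  rw [ENNReal.mul_rpow_of_nonneg _ _ (by positivity), ← ENNReal.rpow_mul,
    mul_div_cancel₀ r hq.ne']

theorem sInf_le_mul_sInf {S T : Set ℝ≥0∞} {K : ℝ≥0∞} (hK0 : K ≠ 0) (hK : K ≠ ∞)
    (h : ∀ C ∈ S, K * C ∈ T) : sInf T ≤ K * sInf S := by
  rw [mul_comm, ← ENNReal.div_le_iff hK0 hK]
  exact le_sInf fun C hC => (ENNReal.div_le_iff hK0 hK).mpr (mul_comm K C ▸ sInf_le (h C hC))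

theorem sInf_le_mul_add_sInf {S₁ S₂ T : Set ℝ≥0∞} {K : ℝ≥0∞} (hK0 : K ≠ 0) (hK : K ≠ ∞)
    (h : ∀ C₁ ∈ S₁, ∀ C₂ ∈ S₂, K * (C₁ + C₂) ∈ T) : sInf T ≤ K * (sInf S₁ + sInf S₂) := by
  rw [mul_comm, ← ENNReal.div_le_iff hK0 hK, sInf_eq_iInf' S₁, sInf_eq_iInf' S₂]
  exact ENNReal.le_iInf_add_iInf fun (C₁ : S₁) (C₂ : S₂) => (ENNReal.div_le_iff hK0 hK).mpr
    (mul_comm K _ ▸ sInf_le (h _ C₁.2 _ C₂.2))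

end ENNReal

/-! ### Sums over `k > N` with weights `2 ^ (-k)` -/

theorem two_rpow_neg_intCast_add_natCast (M : ℤ) (n : ℕ) :
    (2 : ℝ≥0∞) ^ (-((M + n : ℤ) : ℝ)) = 2 ^ (-(M : ℝ)) * 2⁻¹ ^ n := by
  rw [← ENNReal.inv_pow, ← ENNReal.rpow_natCast, ← ENNReal.rpow_neg,
    ← ENNReal.rpow_add _ _ two_ne_zero ofNat_ne_top]
  push_cast; ring_nf

theorem two_rpow_neg_intCast_eq_two_mul (k : ℤ) :
    (2 : ℝ≥0∞) ^ (-(k : ℝ)) = 2 * 2 ^ (-((k + 1 : ℤ) : ℝ)) := by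
  conv_lhs => rw [show -(k : ℝ) = 1 + -((k + 1 : ℤ) : ℝ) by push_cast; ring]
  rw [ENNReal.rpow_add _ _ two_ne_zero ofNat_ne_top, ENNReal.rpow_one]

theorem tsum_Ioi_eq_tsum_nat (N : ℤ) (g : ℤ → ℝ≥0∞) :
    ∑' k : {k : ℤ // N < k}, g k = ∑' n : ℕ, g (N + 1 + n) := by
  let e : ℕ ≃ {k : ℤ // N < k} :=
    { toFun n := ⟨N + 1 + n, by omega⟩
      invFun k := (k.1 - (N + 1)).toNat
      left_inv n := by simp
      right_inv k := Subtype.ext (by have := k.2; simp only; omega) }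
  exact (e.tsum_eq fun k => g k).symm

theorem tsum_Ioi_two_rpow_neg_mul (N : ℤ) (g : ℤ → ℝ≥0∞) :
    ∑' k : {k : ℤ // N < k}, 2 ^ (-(k : ℝ)) * g k
      = 2 ^ (-((N + 1 : ℤ) : ℝ)) * ∑' n : ℕ, 2⁻¹ ^ n * g (N + 1 + n) := by
  rw [tsum_Ioi_eq_tsum_nat N fun k => 2 ^ (-(k : ℝ)) * g k, ← ENNReal.tsum_mul_left]
  simp_rw [two_rpow_neg_intCast_add_natCast, mul_assoc]

theorem tsum_Ioi_comp_add_one_le (N : ℤ) (g : ℤ → ℝ≥0∞) :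
    ∑' k : {k : ℤ // N < k}, g (k + 1) ≤ ∑' k : {k : ℤ // N < k}, g k :=
  ENNReal.tsum_comp_le_tsum_of_injective
    (f := fun k : {k : ℤ // N < k} => (⟨k + 1, by omega⟩ : {k : ℤ // N < k}))
    (fun i j hij => Subtype.ext (by simpa using hij)) fun k => g k

theorem tsum_Ioi_comp_sub_one (N : ℤ) (g : ℤ → ℝ≥0∞) :
    ∑' k : {k : ℤ // N < k}, g (k - 1) = g N + ∑' k : {k : ℤ // N < k}, g k := by
  rw [tsum_Ioi_eq_tsum_nat N fun k => g (k - 1), tsum_Ioi_eq_tsum_nat,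
    tsum_eq_zero_add' ENNReal.summable]
  congr 1
  · simp
  · exact tsum_congr fun n => congrArg g (by push_cast; ring)

theorem sum_Icc_eq_sum_range (N : ℤ) (n : ℕ) (c : ℤ → ℝ≥0∞) :
    ∑ j ∈ Finset.Icc (N + 1) (N + 1 + n), c j = ∑ i ∈ Finset.range (n + 1), c (N + 1 + i) :=
  Finset.sum_nbij' (fun j => (j - (N + 1)).toNat) (fun i => N + 1 + i)
    (fun j hj => by simp at hj ⊢; omega) (fun i hi => by simp at hi ⊢; omega)
    (fun j hj => by simp at hj; omega) (fun i _ => by simp)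
    (fun j hj => by simp at hj; congr; omega)

theorem exists_tsum_Ioi_two_rpow_neg_mul_sum_Icc_rpow_le {ρ : ℝ} (hρ : 0 < ρ) :
    ∃ K : ℝ≥0∞, K ≠ 0 ∧ K ≠ ∞ ∧ ∀ (N : ℤ) (c : ℤ → ℝ≥0∞),
      ∑' k : {k : ℤ // N < k}, 2 ^ (-(k : ℝ)) * (∑ j ∈ Finset.Icc (N + 1) k, c j) ^ ρ
        ≤ K * ∑' k : {k : ℤ // N < k}, 2 ^ (-(k : ℝ)) * c k ^ ρ := by
  obtain ⟨K, hK0, hK, hHardy⟩ := ENNReal.exists_tsum_inv_two_pow_mul_sum_range_rpow_le hρ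
  refine ⟨K, hK0, hK, fun N c => ?_⟩
  rw [tsum_Ioi_two_rpow_neg_mul N fun k => (∑ j ∈ Finset.Icc (N + 1) k, c j) ^ ρ,
    tsum_Ioi_two_rpow_neg_mul N fun k => c k ^ ρ, mul_left_comm]
  simp_rw [sum_Icc_eq_sum_range]
  gcongr
  exact hHardy fun i => c (N + 1 + i)

/-! ### Grids of an interval -/

theorem measurableSet_Iab (a b : EReal) : MeasurableSet (Iab a b) :=
  measurable_coe_real_ereal measurableSet_Ioo

theorem Iab_subset_Iab {a a' b b' : EReal} (ha : a' ≤ a) (hb : b ≤ b') :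
    Iab a b ⊆ Iab a' b' :=
  fun _ hy => ⟨ha.trans_lt hy.1, hy.2.trans_le hb⟩

theorem Iab_self (c : EReal) : Iab c c = ∅ :=
  eq_empty_of_forall_notMem fun _ hy => lt_asymm hy.1 hy.2

theorem volume_preimage_coe_range (x : ℤ → EReal) :
    volume (((↑) : ℝ → EReal) ⁻¹' range x) = 0 :=
  ((countable_range x).preimage EReal.coe_injective).measure_zero _

theorem setLIntegral_le_of_subset_union_null {s t P : Set ℝ} (h : s ⊆ t ∪ P)
    (hP : volume P = 0) (g : ℝ → ℝ≥0∞) : ∫⁻ y in s, g y ≤ ∫⁻ y in t, g y :=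
  lintegral_mono_set' <| ae_le_set.mpr <|
    measure_mono_null (fun _ hy => (h hy.1).resolve_left hy.2) hP

theorem lintegral_Iab_le_add (a c e : EReal) (g : ℝ → ℝ≥0∞) :
    ∫⁻ s in Iab a e, g s ≤ (∫⁻ s in Iab a c, g s) + ∫⁻ s in Iab c e, g s := by
  refine (setLIntegral_le_of_subset_union_null (t := Iab a c ∪ Iab c e)
    (P := ((↑) : ℝ → EReal) ⁻¹' {c}) (fun y hy => ?_) ?_ g).trans (lintegral_union_le g _ _)
  · rcases lt_trichotomy (y : EReal) c with h | h | h
    exacts [Or.inl (Or.inl ⟨hy.1, h⟩), Or.inr h, Or.inl (Or.inr ⟨h, hy.2⟩)]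
  · exact ((countable_singleton c).preimage EReal.coe_injective).measure_zero _

/-- A discretizing sequence without the bounds on `W`; `exhausts` stands for the paper's
`x_k → b`. -/
structure IsGrid (a b : EReal) (N : ℤ) (x : ℤ → EReal) : Prop where
  start : x N = a
  lt_succ : ∀ k, N ≤ k → x k < x (k + 1)
  le_right : ∀ k, N ≤ k → x k ≤ b
  exhausts : ∀ y ∈ Iab a b, ∃ k, N ≤ k ∧ (y : EReal) < x k

namespace IsGrid

variable {a b : EReal} {N : ℤ} {x : ℤ → EReal} {w : ℝ → ℝ≥0∞} {Φ : EReal → ℝ≥0∞}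

theorem le_of_le (hx : IsGrid a b N x) {i j : ℤ} (hi : N ≤ i) (hij : i ≤ j) : x i ≤ x j := by
  induction j, hij using Int.leInduction with
  | base => exact le_rfl
  | succ j hij ih => exact ih.trans (hx.lt_succ j (hi.trans hij)).le

theorem left_le (hx : IsGrid a b N x) {k : ℤ} (hk : N ≤ k) : a ≤ x k :=
  hx.start ▸ hx.le_of_le le_rfl hk

theorem cell_subset (hx : IsGrid a b N x) {k : ℤ} (hk : N < k) :
    Iab (x (k - 1)) (x k) ⊆ Iab a b :=
  Iab_subset_Iab (hx.left_le (by omega)) (hx.le_right k hk.le)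

theorem disjoint_cell (hx : IsGrid a b N x) {i j : ℤ} (hi : N < i) (hj : N < j) (hij : i ≠ j) :
    Disjoint (Iab (x (i - 1)) (x i)) (Iab (x (j - 1)) (x j)) := by
  wlog h : i < j generalizing i j
  · exact (this hj hi hij.symm (by omega)).symm
  exact Set.disjoint_left.mpr fun y hyi hyj =>
    lt_asymm (hyi.2.trans_le (hx.le_of_le hi.le (by omega))) hyj.1

theorem tail (hx : IsGrid a b N x) {c : ℤ} (hc : N ≤ c) : IsGrid (x c) b c x where
  start := rfl
  lt_succ k hk := hx.lt_succ k (hc.trans hk)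
  le_right k hk := hx.le_right k (hc.trans hk)
  exhausts y hy := by
    obtain ⟨k, hNk, hk⟩ := hx.exhausts y (Iab_subset_Iab (hx.left_le hc) le_rfl hy)
    exact ⟨max k c, le_max_right _ _, hk.trans_le (hx.le_of_le (by omega) (le_max_left _ _))⟩

theorem Iab_subset_biUnion (hx : IsGrid a b N x) {c : ℤ} (hc : N ≤ c) :
    Iab a (x c) ⊆ (⋃ j ∈ Finset.Icc (N + 1) c, Iab (x (j - 1)) (x j)) ∪ (↑) ⁻¹' range x := by
  induction c, hc using Int.leInduction with
  | base => simp [hx.start, Iab_self]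
  | succ c hc ih =>
    intro y hy
    rcases lt_trichotomy (y : EReal) (x c) with h | h | h
    · refine (ih ⟨hy.1, h⟩).imp (fun hy' => ?_) id
      exact biUnion_mono (fun j hj => by simp only [Finset.coe_Icc, mem_Icc] at hj ⊢; omega)
        (fun _ _ => subset_rfl) hy'
    · exact Or.inr ⟨c, h.symm⟩
    · exact Or.inl (mem_biUnion (x := c + 1) (by simp; omega) ⟨by simpa using h, hy.2⟩)

theorem lintegral_le_sum (hx : IsGrid a b N x) {c : ℤ} (hc : N ≤ c) (g : ℝ → ℝ≥0∞) :
    ∫⁻ s in Iab a (x c), g s ≤ ∑ j ∈ Finset.Icc (N + 1) c, ∫⁻ s in Iab (x (j - 1)) (x j), g s := by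
  refine (setLIntegral_le_of_subset_union_null (hx.Iab_subset_biUnion hc)
    (volume_preimage_coe_range x) g).trans_eq
    (lintegral_biUnion_finset ?_ (fun _ _ => measurableSet_Iab _ _) g)
  intro i hi j hj hij
  simp only [Finset.coe_Icc, mem_Icc] at hi hj
  exact hx.disjoint_cell (by omega) (by omega) hij

theorem lintegral_eq_tsum (hx : IsGrid a b N x) (g : ℝ → ℝ≥0∞) :
    ∫⁻ s in Iab a b, g s = ∑' k : {k : ℤ // N < k}, ∫⁻ s in Iab (x (k - 1)) (x k), g s := by
  rw [← lintegral_iUnion (fun _ => measurableSet_Iab _ _)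
    fun i j hij => hx.disjoint_cell i.2 j.2 (Subtype.coe_ne_coe.mpr hij)]
  refine le_antisymm (setLIntegral_le_of_subset_union_null (fun y hy => ?_)
    (volume_preimage_coe_range x) g)
    (lintegral_mono_set (iUnion_subset fun k => hx.cell_subset k.2))
  obtain ⟨c, hc, hyc⟩ := hx.exhausts y hy
  refine (hx.Iab_subset_biUnion hc ⟨hy.1, hyc⟩).imp (fun hy' => ?_) id
  obtain ⟨j, hj, hyj⟩ := mem_iUnion₂.mp hy'
  exact mem_iUnion.mpr ⟨⟨j, by simp at hj; omega⟩, hyj⟩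

theorem lintegral_mul_le (hx : IsGrid a b N x) (hw : Measurable w) {d₂ : ℝ≥0∞}
    (hW : ∀ k, N ≤ k → Wf w b (x k) ≤ d₂ * 2 ^ (-(k : ℝ))) (hΦ : Monotone Φ) :
    ∫⁻ s in Iab a b, Φ s * w s ≤ 2 * d₂ * ∑' k : {k : ℤ // N < k}, 2 ^ (-(k : ℝ)) * Φ (x k) := by
  rw [hx.lintegral_eq_tsum, ← ENNReal.tsum_mul_left]
  refine ENNReal.tsum_le_tsum fun k => ?_
  have hk := k.2
  calc ∫⁻ s in Iab (x (k - 1)) (x k), Φ s * w s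
      ≤ ∫⁻ s in Iab (x (k - 1)) (x k), Φ (x k) * w s :=
        setLIntegral_mono' (measurableSet_Iab _ _) fun s hs => by gcongr; exact hΦ hs.2.le
    _ = Φ (x k) * ∫⁻ s in Iab (x (k - 1)) (x k), w s := lintegral_const_mul _ hw
    _ ≤ Φ (x k) * (d₂ * 2 ^ (-((k - 1 : ℤ) : ℝ))) := by
        gcongr
        exact (lintegral_mono_set (Iab_subset_Iab le_rfl (hx.le_right k hk.le))).trans
          (hW _ (by omega))
    _ = 2 * d₂ * (2 ^ (-(k : ℝ)) * Φ (x k)) := by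
        rw [two_rpow_neg_intCast_eq_two_mul, sub_add_cancel]; ring

theorem mul_tsum_le_lintegral_mul (hx : IsGrid a b N x) {d₁ : ℝ≥0∞}
    (hW : ∀ k, N ≤ k → d₁ * 2 ^ (-(k : ℝ)) ≤ Wf w b (x k)) (hΦ : Monotone Φ) :
    d₁ * ∑' k : {k : ℤ // N < k}, 2 ^ (-(k : ℝ)) * Φ (x k) ≤ 2 * ∫⁻ s in Iab a b, Φ s * w s := by
  set A : ℕ → ℝ≥0∞ := fun n => ∫⁻ s in Iab (x (N + 1 + n)) (x (N + 1 + n + 1)), w s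
  have hT : Monotone fun n : ℕ => Φ (x (N + 1 + n)) := fun m n hmn =>
    hΦ (hx.le_of_le (by omega) (by omega))
  have hA : ∀ n : ℕ, d₁ * 2 ^ (-((N + 1 : ℤ) : ℝ)) * 2⁻¹ ^ n ≤ ∑' m, A (n + m) := by
    intro n
    calc d₁ * 2 ^ (-((N + 1 : ℤ) : ℝ)) * 2⁻¹ ^ n = d₁ * 2 ^ (-((N + 1 + n : ℤ) : ℝ)) := by
          rw [two_rpow_neg_intCast_add_natCast, mul_assoc]
      _ ≤ Wf w b (x (N + 1 + n)) := hW _ (by omega)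
      _ = ∑' m : ℕ, A (n + m) := by
          rw [Wf, (hx.tail (by omega)).lintegral_eq_tsum, tsum_Ioi_eq_tsum_nat _ fun k =>
            ∫⁻ s in Iab (x (k - 1)) (x k), w s]
          refine tsum_congr fun m => ?_
          rw [show N + 1 + n + 1 + m - 1 = N + 1 + ↑(n + m) by push_cast; ring,
            show N + 1 + n + 1 + m = N + 1 + ↑(n + m) + 1 by push_cast; ring]
  calc d₁ * ∑' k : {k : ℤ // N < k}, 2 ^ (-(k : ℝ)) * Φ (x k)
      = d₁ * 2 ^ (-((N + 1 : ℤ) : ℝ)) * ∑' n : ℕ, 2⁻¹ ^ n * Φ (x (N + 1 + n)) := by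
        rw [tsum_Ioi_two_rpow_neg_mul N fun k => Φ (x k), mul_assoc]
    _ ≤ 2 * ∑' n, A n * Φ (x (N + 1 + n)) := ENNReal.mul_tsum_inv_two_pow_mul_le hT hA
    _ ≤ 2 * ∑' n : ℕ, ∫⁻ s in Iab (x (N + 1 + n)) (x (N + 1 + n + 1)), Φ s * w s := by
        gcongr with n
        calc A n * Φ (x (N + 1 + n)) = Φ (x (N + 1 + n)) * A n := mul_comm _ _
          _ ≤ ∫⁻ s in Iab (x (N + 1 + n)) (x (N + 1 + n + 1)), Φ (x (N + 1 + n)) * w s :=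
            lintegral_const_mul_le _ _
          _ ≤ _ := setLIntegral_mono' (measurableSet_Iab _ _) fun s hs => by
            gcongr; exact hΦ hs.1.le
    _ ≤ 2 * ∑' k : {k : ℤ // N < k}, ∫⁻ s in Iab (x (k - 1)) (x k), Φ s * w s := by
        gcongr
        refine le_of_eq_of_le ?_ (tsum_Ioi_comp_add_one_le N fun k =>
          ∫⁻ s in Iab (x (k - 1)) (x k), Φ s * w s)
        rw [tsum_Ioi_eq_tsum_nat N fun k => ∫⁻ s in Iab (x (k + 1 - 1)) (x (k + 1)), Φ s * w s]
        simp only [add_sub_cancel_right]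
    _ = 2 * ∫⁻ s in Iab a b, Φ s * w s := by rw [hx.lintegral_eq_tsum]

end IsGrid

theorem isGrid_of_wf_le {a b : EReal} {w : ℝ → ℝ≥0∞} {N : ℤ} {x : ℤ → EReal} {d₂ : ℝ≥0∞}
    (hd₂ : d₂ ≠ ∞) (hxN : x N = a) (hx : ∀ k, N ≤ k → x k < x (k + 1))
    (hxb : ∀ k, N ≤ k → x k ≤ b) (hW : ∀ t ∈ Iab a b, 0 < Wf w b t)
    (hWx : ∀ k, N ≤ k → Wf w b (x k) ≤ d₂ * 2 ^ (-(k : ℝ))) : IsGrid a b N x where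
  start := hxN
  lt_succ := hx
  le_right := hxb
  exhausts y hy := by
    by_contra! hle
    have hlim : Filter.Tendsto (fun n : ℕ => d₂ * 2 ^ (-(N : ℝ)) * 2⁻¹ ^ n) Filter.atTop
        (nhds 0) := by
      simpa using ENNReal.Tendsto.const_mul (ENNReal.tendsto_pow_atTop_nhds_zero_of_lt_one
        (ENNReal.inv_lt_one.mpr one_lt_two))
        (Or.inr (ENNReal.mul_ne_top hd₂ (ENNReal.rpow_ne_top_of_ne_zero two_ne_zero ofNat_ne_top)))
    refine (hW y hy).ne' (le_antisymm (ge_of_tendsto' hlim fun n => ?_) zero_le)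
    calc Wf w b y ≤ Wf w b (x (N + n)) :=
          lintegral_mono_set (Iab_subset_Iab (hle _ (by omega)) le_rfl)
      _ ≤ d₂ * 2 ^ (-((N + n : ℤ) : ℝ)) := hWx _ (by omega)
      _ = d₂ * 2 ^ (-(N : ℝ)) * 2⁻¹ ^ n := by rw [two_rpow_neg_intCast_add_natCast, mul_assoc]

/-! ### The iterated Hardy operator on a grid -/

def innerHardy (a : EReal) (u : ℝ → ℝ≥0∞) (q : ℝ) (f : ℝ → ℝ≥0∞) (e : EReal) : ℝ≥0∞ :=
  ∫⁻ t in Iab a e, (∫⁻ s in Iab a t, f s) ^ q * u t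

section innerHardy

variable {a c : EReal} {u : ℝ → ℝ≥0∞} {q : ℝ} {f : ℝ → ℝ≥0∞}

theorem lhsIter_eq (b : EReal) (w : ℝ → ℝ≥0∞) (r : ℝ) :
    lhsIter a b u w q r f = (∫⁻ s in Iab a b, innerHardy a u q f s ^ (r / q) * w s) ^ (1 / r) :=
  rfl

theorem monotone_innerHardy : Monotone (innerHardy a u q f) :=
  fun _ _ h => lintegral_mono_set (Iab_subset_Iab le_rfl h)

theorem lintegral_rpow_mul_le_innerHardy (hq : 0 ≤ q) (hac : a ≤ c) (e : EReal) :
    ∫⁻ t in Iab c e, (∫⁻ s in Iab c t, f s) ^ q * u t ≤ innerHardy a u q f e :=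
  (setLIntegral_mono' (measurableSet_Iab _ _) fun t _ => by
    gcongr; exact Iab_subset_Iab hac le_rfl).trans
    (lintegral_mono_set (Iab_subset_Iab hac le_rfl))

theorem rpow_mul_lintegral_le_innerHardy (hq : 0 ≤ q) (hac : a ≤ c) (e : EReal) :
    (∫⁻ s in Iab a c, f s) ^ q * ∫⁻ t in Iab c e, u t ≤ innerHardy a u q f e :=
  calc (∫⁻ s in Iab a c, f s) ^ q * ∫⁻ t in Iab c e, u t
      ≤ ∫⁻ t in Iab c e, (∫⁻ s in Iab a c, f s) ^ q * u t := lintegral_const_mul_le _ _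
    _ ≤ ∫⁻ t in Iab c e, (∫⁻ s in Iab a t, f s) ^ q * u t :=
        setLIntegral_mono' (measurableSet_Iab _ _) fun t ht => by
          gcongr; exact Iab_subset_Iab le_rfl ht.1.le
    _ ≤ innerHardy a u q f e := lintegral_mono_set (Iab_subset_Iab hac le_rfl)

theorem lintegral_rpow_mul_le_two_rpow_mul (hq : 0 ≤ q) (hu : Measurable u) (e : EReal) :
    ∫⁻ t in Iab c e, (∫⁻ s in Iab a t, f s) ^ q * u t
      ≤ 2 ^ q * ((∫⁻ s in Iab a c, f s) ^ q * (∫⁻ t in Iab c e, u t)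
        + ∫⁻ t in Iab c e, (∫⁻ s in Iab c t, f s) ^ q * u t) :=
  calc ∫⁻ t in Iab c e, (∫⁻ s in Iab a t, f s) ^ q * u t
      ≤ ∫⁻ t in Iab c e, 2 ^ q * ((∫⁻ s in Iab a c, f s) ^ q * u t
          + (∫⁻ s in Iab c t, f s) ^ q * u t) :=
        setLIntegral_mono' (measurableSet_Iab _ _) fun t _ =>
          calc (∫⁻ s in Iab a t, f s) ^ q * u t
              ≤ ((∫⁻ s in Iab a c, f s) + ∫⁻ s in Iab c t, f s) ^ q * u t := by
                gcongr; exact lintegral_Iab_le_add a c t f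
            _ ≤ 2 ^ q * ((∫⁻ s in Iab a c, f s) ^ q + (∫⁻ s in Iab c t, f s) ^ q) * u t := by
                gcongr; exact ENNReal.add_rpow_le_two_rpow_mul _ _ hq
            _ = _ := by ring
    _ = _ := by
        rw [lintegral_const_mul' _ _ (ENNReal.rpow_ne_top_of_nonneg hq ofNat_ne_top),
          lintegral_add_left (hu.const_mul _), lintegral_const_mul _ hu]

end innerHardy

/-- The summands on the left are those of `Disc2` shifted by one; the extra `k = N` term
vanishes because `x N = a`. -/
theorem tsum_rpow_le_disc2 {a : EReal} {N : ℤ} {x : ℤ → EReal} (hxN : x N = a)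
    {u f : ℝ → ℝ≥0∞} {q r : ℝ} (hq : 0 < q) (hr : 0 < r) :
    ∑' k : {k : ℤ // N < k}, 2 ^ (-(k : ℝ)) *
        ((∫⁻ s in Iab a (x (k - 1)), f s) ^ q * ∫⁻ t in Iab (x (k - 1)) (x k), u t) ^ (r / q)
      ≤ ∑' k : {k : ℤ // N < k}, 2 ^ (-(k : ℝ)) * (∫⁻ s in Iab a (x k), f s) ^ r *
        (∫⁻ s in Iab (x k) (x (k + 1)), u s) ^ (r / q) := by
  set P : ℤ → ℝ≥0∞ := fun j =>
    2 ^ (-(j : ℝ)) * (∫⁻ s in Iab a (x j), f s) ^ r * (∫⁻ s in Iab (x j) (x (j + 1)), u s) ^ (r / q)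
  calc _ ≤ ∑' k : {k : ℤ // N < k}, P (k - 1) := ENNReal.tsum_le_tsum fun k => by
        simp only [P, sub_add_cancel]
        rw [ENNReal.rpow_mul_rpow_div _ _ hq hr.le, ← mul_assoc]
        gcongr
        · exact one_le_two
        · linarith
    _ = P N + ∑' k : {k : ℤ // N < k}, P k := tsum_Ioi_comp_sub_one N P
    _ = _ := by simp [P, hxN, Iab_self, ENNReal.zero_rpow_of_pos hr]

namespace IsGrid

variable {a b : EReal} {N : ℤ} {x : ℤ → EReal} {u v w f : ℝ → ℝ≥0∞} {p q r : ℝ}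

theorem rhsLp_eq (hx : IsGrid a b N x) : rhsLp a b v p f = DiscRHS v p N x f := by
  rw [rhsLp, DiscRHS, hx.lintegral_eq_tsum]

theorem tsum_disc1_le (hx : IsGrid a b N x) (hq : 0 < q) (hr : 0 ≤ r) :
    ∑' k : {k : ℤ // N < k}, 2 ^ (-(k : ℝ)) *
        (∫⁻ t in Iab (x (k - 1)) (x k), (∫⁻ s in Iab (x (k - 1)) t, f s) ^ q * u t) ^ (r / q)
      ≤ ∑' k : {k : ℤ // N < k}, 2 ^ (-(k : ℝ)) * innerHardy a u q f (x k) ^ (r / q) :=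
  ENNReal.tsum_le_tsum fun k => by
    gcongr; exact lintegral_rpow_mul_le_innerHardy hq.le (hx.left_le (by omega)) _

theorem tsum_disc2_le (hx : IsGrid a b N x) (hq : 0 < q) (hr : 0 ≤ r) :
    ∑' k : {k : ℤ // N < k}, 2 ^ (-(k : ℝ)) * (∫⁻ s in Iab a (x k), f s) ^ r *
        (∫⁻ s in Iab (x k) (x (k + 1)), u s) ^ (r / q)
      ≤ 2 * ∑' k : {k : ℤ // N < k}, 2 ^ (-(k : ℝ)) * innerHardy a u q f (x k) ^ (r / q) :=
  calc _ ≤ ∑' k : {k : ℤ // N < k},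
        2 * (2 ^ (-((k + 1 : ℤ) : ℝ)) * innerHardy a u q f (x (k + 1)) ^ (r / q)) :=
        ENNReal.tsum_le_tsum fun k => by
          rw [mul_assoc, ← ENNReal.rpow_mul_rpow_div _ _ hq hr, two_rpow_neg_intCast_eq_two_mul,
            mul_assoc]
          gcongr
          exact rpow_mul_lintegral_le_innerHardy hq.le (hx.left_le k.2.le) _
    _ ≤ _ := by
        rw [ENNReal.tsum_mul_left]
        exact mul_le_mul_right (tsum_Ioi_comp_add_one_le N fun k =>
          2 ^ (-(k : ℝ)) * innerHardy a u q f (x k) ^ (r / q)) 2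

theorem rpow_le_of_mainIneq (hx : IsGrid a b N x) (hq : 0 < q) (hr : 0 < r) {d₁ : ℝ≥0∞}
    (hd₁ : d₁ ≠ 0) (hd₁' : d₁ ≠ ∞) (hW : ∀ k, N ≤ k → d₁ * 2 ^ (-(k : ℝ)) ≤ Wf w b (x k))
    {C : ℝ≥0∞} (hmain : MainIneq a b u v w p q r C) (hf : Measurable f) {S : ℝ≥0∞}
    (hS : S ≤ 2 * ∑' k : {k : ℤ // N < k}, 2 ^ (-(k : ℝ)) * innerHardy a u q f (x k) ^ (r / q)) :
    S ^ (1 / r) ≤ (4 * d₁⁻¹) ^ (1 / r) * C * DiscRHS v p N x f := by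
  have hY := hx.mul_tsum_le_lintegral_mul hW (w := w) fun _ _ h =>
    ENNReal.rpow_le_rpow (monotone_innerHardy (a := a) (u := u) (q := q) (f := f) h)
      (div_pos hr hq).le
  rw [ENNReal.mul_le_iff_le_inv hd₁ hd₁'] at hY
  calc S ^ (1 / r)
      ≤ ((4 * d₁⁻¹) * ∫⁻ s in Iab a b, innerHardy a u q f s ^ (r / q) * w s) ^ (1 / r) := by
        gcongr
        calc S ≤ 2 * (d₁⁻¹ * (2 * ∫⁻ s in Iab a b, innerHardy a u q f s ^ (r / q) * w s)) :=
              hS.trans (mul_le_mul_right hY 2)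
          _ = _ := by ring
    _ = (4 * d₁⁻¹) ^ (1 / r) * lhsIter a b u w q r f :=
        ENNReal.mul_rpow_of_nonneg _ _ (by positivity)
    _ ≤ (4 * d₁⁻¹) ^ (1 / r) * (C * rhsLp a b v p f) := by gcongr; exact hmain f hf
    _ = (4 * d₁⁻¹) ^ (1 / r) * C * DiscRHS v p N x f := by rw [hx.rhsLp_eq, mul_assoc]

theorem innerHardy_le_two_rpow_mul_sum (hx : IsGrid a b N x) (hq : 0 ≤ q) (hu : Measurable u)
    {c : ℤ} (hc : N ≤ c) :
    innerHardy a u q f (x c) ≤ 2 ^ q * ∑ j ∈ Finset.Icc (N + 1) c,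
      ((∫⁻ s in Iab a (x (j - 1)), f s) ^ q * (∫⁻ t in Iab (x (j - 1)) (x j), u t)
        + ∫⁻ t in Iab (x (j - 1)) (x j), (∫⁻ s in Iab (x (j - 1)) t, f s) ^ q * u t) := by
  rw [Finset.mul_sum]
  exact (hx.lintegral_le_sum hc _).trans
    (Finset.sum_le_sum fun j _ => lintegral_rpow_mul_le_two_rpow_mul hq hu _)

theorem disc1_and_disc2_of_mainIneq (hx : IsGrid a b N x) (hq : 0 < q) (hr : 0 < r)
    {d₁ : ℝ≥0∞} (hd₁ : d₁ ≠ 0) (hd₁' : d₁ ≠ ∞)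
    (hW : ∀ k, N ≤ k → d₁ * 2 ^ (-(k : ℝ)) ≤ Wf w b (x k))
    {C : ℝ≥0∞} (hmain : MainIneq a b u v w p q r C) :
    Disc1 u v p q r N x ((4 * d₁⁻¹) ^ (1 / r) * C) ∧
      Disc2 a u v p q r N x ((4 * d₁⁻¹) ^ (1 / r) * C) :=
  ⟨fun _ hf => hx.rpow_le_of_mainIneq hq hr hd₁ hd₁' hW hmain hf
      ((hx.tsum_disc1_le hq hr.le).trans (le_mul_of_one_le_left zero_le one_le_two)),
    fun _ hf => hx.rpow_le_of_mainIneq hq hr hd₁ hd₁' hW hmain hf (hx.tsum_disc2_le hq hr.le)⟩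

theorem tsum_rpow_innerHardy_le (hx : IsGrid a b N x) (hq : 0 < q) (hr : 0 < r)
    (hu : Measurable u) {K : ℝ≥0∞} (hK : ∀ c : ℤ → ℝ≥0∞,
      ∑' k : {k : ℤ // N < k}, 2 ^ (-(k : ℝ)) * (∑ j ∈ Finset.Icc (N + 1) k, c j) ^ (r / q)
        ≤ K * ∑' k : {k : ℤ // N < k}, 2 ^ (-(k : ℝ)) * c k ^ (r / q)) :
    ∑' k : {k : ℤ // N < k}, 2 ^ (-(k : ℝ)) * innerHardy a u q f (x k) ^ (r / q)
      ≤ 2 ^ r * K * 2 ^ (r / q) *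
        (∑' k : {k : ℤ // N < k}, 2 ^ (-(k : ℝ)) *
            ((∫⁻ s in Iab a (x (k - 1)), f s) ^ q * ∫⁻ t in Iab (x (k - 1)) (x k), u t) ^ (r / q)
          + ∑' k : {k : ℤ // N < k}, 2 ^ (-(k : ℝ)) *
            (∫⁻ t in Iab (x (k - 1)) (x k), (∫⁻ s in Iab (x (k - 1)) t, f s) ^ q * u t) ^
              (r / q)) := by
  have hρ : 0 ≤ r / q := (div_pos hr hq).le
  set T : ℤ → ℝ≥0∞ := fun j =>
    (∫⁻ s in Iab a (x (j - 1)), f s) ^ q * ∫⁻ t in Iab (x (j - 1)) (x j), u t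
  set L : ℤ → ℝ≥0∞ := fun j =>
    ∫⁻ t in Iab (x (j - 1)) (x j), (∫⁻ s in Iab (x (j - 1)) t, f s) ^ q * u t
  calc ∑' k : {k : ℤ // N < k}, 2 ^ (-(k : ℝ)) * innerHardy a u q f (x k) ^ (r / q)
      ≤ ∑' k : {k : ℤ // N < k}, 2 ^ (-(k : ℝ)) *
          (2 ^ q * ∑ j ∈ Finset.Icc (N + 1) k, (T j + L j)) ^ (r / q) :=
        ENNReal.tsum_le_tsum fun k => by
          gcongr; exact hx.innerHardy_le_two_rpow_mul_sum hq.le hu k.2.le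
    _ = 2 ^ r * ∑' k : {k : ℤ // N < k}, 2 ^ (-(k : ℝ)) *
          (∑ j ∈ Finset.Icc (N + 1) k, (T j + L j)) ^ (r / q) := by
        rw [← ENNReal.tsum_mul_left]
        refine tsum_congr fun k => ?_
        rw [ENNReal.mul_rpow_of_nonneg _ _ hρ, ← ENNReal.rpow_mul, mul_div_cancel₀ r hq.ne']
        ring
    _ ≤ 2 ^ r * (K * ∑' k : {k : ℤ // N < k}, 2 ^ (-(k : ℝ)) * (T k + L k) ^ (r / q)) := by
        gcongr; exact hK fun j => T j + L j
    _ ≤ 2 ^ r * (K * ∑' k : {k : ℤ // N < k}, 2 ^ (-(k : ℝ)) *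
          (2 ^ (r / q) * (T k ^ (r / q) + L k ^ (r / q)))) := by
        gcongr; exact ENNReal.add_rpow_le_two_rpow_mul _ _ hρ
    _ = _ := by
        simp_rw [mul_left_comm _ ((2 : ℝ≥0∞) ^ (r / q)), ENNReal.tsum_mul_left, mul_add,
          ENNReal.tsum_add]
        ring

theorem mainIneq_of_disc (hx : IsGrid a b N x) (hq : 0 < q) (hr : 0 < r)
    (hu : Measurable u) (hw : Measurable w) {d₂ : ℝ≥0∞}
    (hW : ∀ k, N ≤ k → Wf w b (x k) ≤ d₂ * 2 ^ (-(k : ℝ))) {K : ℝ≥0∞} (hK : ∀ c : ℤ → ℝ≥0∞,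
      ∑' k : {k : ℤ // N < k}, 2 ^ (-(k : ℝ)) * (∑ j ∈ Finset.Icc (N + 1) k, c j) ^ (r / q)
        ≤ K * ∑' k : {k : ℤ // N < k}, 2 ^ (-(k : ℝ)) * c k ^ (r / q))
    {C' C'' : ℝ≥0∞} (h₁ : Disc1 u v p q r N x C') (h₂ : Disc2 a u v p q r N x C'') :
    MainIneq a b u v w p q r ((4 * d₂ * 2 ^ r * K * 2 ^ (r / q)) ^ (1 / r) * (C' + C'')) := by
  intro f hf
  set D := DiscRHS v p N x f
  have hS₁ := (ENNReal.rpow_inv_le_iff hr).mp (one_div r ▸ h₁ f hf)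
  have hS₂ := (tsum_rpow_le_disc2 hx.start (f := f) (u := u) hq hr).trans
    ((ENNReal.rpow_inv_le_iff hr).mp (one_div r ▸ h₂ f hf))
  rw [lhsIter_eq, hx.rhsLp_eq, mul_assoc]
  refine ENNReal.rpow_one_div_le_mul_of_le_mul_rpow hr ?_
  calc ∫⁻ s in Iab a b, innerHardy a u q f s ^ (r / q) * w s
      ≤ 2 * d₂ * ∑' k : {k : ℤ // N < k}, 2 ^ (-(k : ℝ)) * innerHardy a u q f (x k) ^ (r / q) :=
        hx.lintegral_mul_le hw hW fun _ _ h =>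
          ENNReal.rpow_le_rpow (monotone_innerHardy h) (div_pos hr hq).le
    _ ≤ 2 * d₂ * (2 ^ r * K * 2 ^ (r / q) * ((C'' * D) ^ r + (C' * D) ^ r)) := by
        gcongr
        exact (hx.tsum_rpow_innerHardy_le hq hr hu hK).trans (by gcongr)
    _ ≤ 2 * d₂ * (2 ^ r * K * 2 ^ (r / q) * (2 * ((C' + C'') * D) ^ r)) := by
        gcongr
        rw [add_mul, add_comm (C' * D)]
        exact ENNReal.rpow_add_rpow_le_two_mul _ _ hr.le
    _ = 4 * d₂ * 2 ^ r * K * 2 ^ (r / q) * ((C' + C'') * D) ^ r := by ring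

end IsGrid

theorem statement15 (p q r : ℝ) (hq : 0 < q) (hr : 0 < r)
    (d₁ d₂ : ℝ≥0∞) (hd₁ : 0 < d₁) (hd₂ : d₂ < ∞) (hd : d₁ ≤ d₂) :
    ∃ c₁ c₂ : ℝ≥0∞, 0 < c₁ ∧ c₂ < ∞ ∧
      ∀ (a b : EReal), a < b →
      ∀ u v w : ℝ → ℝ≥0∞, Measurable u → Measurable v → Measurable w →
        (∀ x ∈ Iab a b, 0 < u x ∧ u x < ∞) →
        (∀ x ∈ Iab a b, 0 < v x ∧ v x < ∞) →
        (∀ x ∈ Iab a b, 0 < w x ∧ w x < ∞) →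
        (∀ t ∈ Iab a b, 0 < Wf w b (t : EReal) ∧ Wf w b (t : EReal) < ∞) →
      ∀ (N : ℤ) (x : ℤ → EReal),
        x N = a →
        (∀ k, N ≤ k → x k < x (k + 1)) →
        (∀ k, N ≤ k → a ≤ x k ∧ x k ≤ b) →
        (∀ k, N ≤ k → d₁ * (2 : ℝ≥0∞) ^ (-(k : ℝ)) ≤ Wf w b (x k) ∧
          Wf w b (x k) ≤ d₂ * (2 : ℝ≥0∞) ^ (-(k : ℝ))) →
        (((∃ C : ℝ≥0∞, 0 < C ∧ C < ∞ ∧ MainIneq a b u v w p q r C) ↔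
            (∃ C' C'' : ℝ≥0∞, 0 < C' ∧ C' < ∞ ∧ 0 < C'' ∧ C'' < ∞ ∧
              Disc1 u v p q r N x C' ∧ Disc2 a u v p q r N x C'')) ∧
          c₁ * (sInf {C' | Disc1 u v p q r N x C'} + sInf {C'' | Disc2 a u v p q r N x C''}) ≤
            sInf {C | MainIneq a b u v w p q r C} ∧
          sInf {C | MainIneq a b u v w p q r C} ≤
            c₂ * (sInf {C' | Disc1 u v p q r N x C'} +
              sInf {C'' | Disc2 a u v p q r N x C''})) := by
  obtain ⟨K, hK0, hK, hHardy⟩ := exists_tsum_Ioi_two_rpow_neg_mul_sum_Icc_rpow_le (div_pos hr hq)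
  have hd₁' : d₁ ≠ ∞ := (hd.trans_lt hd₂).ne
  have hd₂0 : d₂ ≠ 0 := (hd₁.trans_le hd).ne'
  have hd₂' : d₂ ≠ ∞ := hd₂.ne
  set Klow : ℝ≥0∞ := (4 * d₁⁻¹) ^ (1 / r)
  set Kup : ℝ≥0∞ := (4 * d₂ * 2 ^ r * K * 2 ^ (r / q)) ^ (1 / r)
  have hd₁inv : d₁⁻¹ ≠ 0 := ENNReal.inv_ne_zero.mpr hd₁'
  obtain ⟨hKlow0, hKlow⟩ : Klow ≠ 0 ∧ Klow ≠ ∞ := ⟨by positivity, by finiteness⟩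
  obtain ⟨hKup0, hKup⟩ : Kup ≠ 0 ∧ Kup ≠ ∞ := ⟨by positivity, by finiteness⟩
  refine ⟨(2 * Klow)⁻¹, Kup, ENNReal.inv_pos.mpr (ENNReal.mul_ne_top ofNat_ne_top hKlow),
    hKup.lt_top, ?_⟩
  intro a b _ u v w hu _ hw _ _ _ hW N x hxN hx hxab hWx
  have hgrid := isGrid_of_wf_le hd₂' hxN hx (fun k hk => (hxab k hk).2) (fun t ht => (hW t ht).1)
    (fun k hk => (hWx k hk).2)
  have hlow := fun C (h : MainIneq a b u v w p q r C) =>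
    hgrid.disc1_and_disc2_of_mainIneq hq hr hd₁.ne' hd₁' (fun k hk => (hWx k hk).1) h
  have hup : ∀ C' C'', Disc1 u v p q r N x C' → Disc2 a u v p q r N x C'' →
      MainIneq a b u v w p q r (Kup * (C' + C'')) := fun _ _ h₁ h₂ =>
    hgrid.mainIneq_of_disc hq hr hu hw (fun k hk => (hWx k hk).2) (hHardy N) h₁ h₂
  refine ⟨⟨fun ⟨C, hC0, hC, hmain⟩ => ?_, fun ⟨C', C'', hC'0, hC', _, hC'', h₁, h₂⟩ => ?_⟩, ?_,
    ENNReal.sInf_le_mul_add_sInf hKup0 hKup fun C₁ h₁ C₂ h₂ => hup C₁ C₂ h₁ h₂⟩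
  · have hKC0 : 0 < Klow * C := ENNReal.mul_pos hKlow0 hC0.ne'
    have hKC : Klow * C < ∞ := ENNReal.mul_lt_top hKlow.lt_top hC
    exact ⟨_, _, hKC0, hKC, hKC0, hKC, hlow C hmain⟩
  · exact ⟨_, ENNReal.mul_pos hKup0 (add_pos_of_pos_of_nonneg hC'0 zero_le).ne',
      ENNReal.mul_lt_top hKup.lt_top (ENNReal.add_lt_top.mpr ⟨hC', hC''⟩), hup C' C'' h₁ h₂⟩
  · rw [ENNReal.inv_mul_le_iff (by positivity) (ENNReal.mul_ne_top ofNat_ne_top hKlow), two_mul,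
      add_mul]
    exact add_le_add (ENNReal.sInf_le_mul_sInf hKlow0 hKlow fun C h => (hlow C h).1)
      (ENNReal.sInf_le_mul_sInf hKlow0 hKlow fun C h => (hlow C h).2)
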